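/- arXiv:math/0210328 — 6 statements merged into one kernel-verified Lean document; each statement's English description precedes it below -/
import Mathlib

section
/- For 0 < a < 1/2 and real x, y with y² ≤ (x² + a²)/4, the real part of 1/(z² + a²) satisfies (x² + a² − y²)/((x² + a² − y²)² + 4x²y²) > 3/(8(x² + a²)). -/
/-- For `0 < a < 1/2` and `y² ≤ (x² + a²)/4`, the real part of
`1/(z² + a²)` satisfies `(x² + a² − y²)/((x² + a² − y²)² + 4x²y²) > 3/(8(x² + a²))`. -/
theorem stmt_7 (a x y : ℝ) (ha : 0 < a) (ha2 : a < 1 / 2)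
    (hy : y ^ 2 ≤ (x ^ 2 + a ^ 2) / 4) :
    (x ^ 2 + a ^ 2 - y ^ 2) / ((x ^ 2 + a ^ 2 - y ^ 2) ^ 2 + 4 * x ^ 2 * y ^ 2)
      > 3 / (8 * (x ^ 2 + a ^ 2)) := by
  have hs : 0 < x ^ 2 + a ^ 2 := by positivity
  have hu : 3 / 4 * (x ^ 2 + a ^ 2) ≤ x ^ 2 + a ^ 2 - y ^ 2 := by nlinarith
  have hD : 0 < (x ^ 2 + a ^ 2 - y ^ 2) ^ 2 + 4 * x ^ 2 * y ^ 2 := by nlinarith [sq_nonneg x, sq_nonneg y]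
  rw [gt_iff_lt, div_lt_div_iff₀ (by positivity) hD]
  nlinarith [sq_nonneg y, sq_nonneg x, sq_nonneg (x*y), mul_nonneg (sq_nonneg x) (sq_nonneg y)]
end

section
/- Let u_a(x, y) = Re((1/a)·arctan((x+iy)/a)) on Ω_a, and y_{x,a} = (x² + a²)^{3/4}/2. Then for all |y| ≤ y_{x,a}, |u_a(x, y) − u_a(x, 0)| ≤ |x|/(2(x² + a²)^{1/2}) < 1. -/
/-!
Along the vertical segment from `x` to `x + iy`, the function `t ↦ Re h(x + it)` has derivative
`Re (i / ((x + it)² + a²)) = 2xt / |(x + it)² + a²|²`. In `Ω_a` we have `4t² ≤ x² + a²`, hence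
`|(x + it)² + a²|² ≥ (x² + a²)² / 2`, and the derivative is bounded by `4|x||t| / (x² + a²)²`.
Comparing with `C t² / 2` gives `|u(x, y) - u(x, 0)| ≤ 2|x| y² / (x² + a²)²`, and the height bound
`y² ≤ (x² + a²)^{3/2} / 4` turns this into `|x| / (2 √(x² + a²))`.
-/

/-- The domain `Ω_a = {x + iy : |x| ≤ 1/2, |y| ≤ (x² + a²)^{3/4}/2}`. -/
def OmegaA (a : ℝ) : Set ℂ :=
  {z | |z.re| ≤ 1 / 2 ∧ |z.im| ≤ (z.re ^ 2 + a ^ 2) ^ ((3 : ℝ) / 4) / 2}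

open Complex Set

lemma abs_sub_le_of_abs_deriv_le_mul_abs_of_nonneg {g g' : ℝ → ℝ} {C y : ℝ} (hy : 0 ≤ y)
    (hg : ∀ t ∈ Icc 0 y, HasDerivAt g (g' t) t) (hbound : ∀ t ∈ Icc 0 y, |g' t| ≤ C * |t|) :
    |g y - g 0| ≤ C * y ^ 2 / 2 := by
  have hB (t : ℝ) : HasDerivAt (fun t => C * t ^ 2 / 2) (C * t) t :=
    (((hasDerivAt_pow 2 t).const_mul C).div_const 2).congr_deriv (by ring)
  refine image_norm_le_of_norm_deriv_right_le_deriv_boundary (f := fun t => g t - g 0)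
    (HasDerivAt.continuousOn fun t ht => (hg t ht).sub_const _)
    (fun t ht => ((hg t (Ico_subset_Icc_self ht)).sub_const _).hasDerivWithinAt)
    (by simp) hB (fun t ht => ?_) (right_mem_Icc.2 hy)
  simpa [abs_of_nonneg ht.1] using hbound t (Ico_subset_Icc_self ht)

lemma abs_sub_le_of_abs_deriv_le_mul_abs {g g' : ℝ → ℝ} {C y : ℝ}
    (hg : ∀ t ∈ uIcc 0 y, HasDerivAt g (g' t) t) (hbound : ∀ t ∈ uIcc 0 y, |g' t| ≤ C * |t|) :
    |g y - g 0| ≤ C * y ^ 2 / 2 := by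
  rcases le_total 0 y with hy | hy
  · rw [uIcc_of_le hy] at hg hbound
    exact abs_sub_le_of_abs_deriv_le_mul_abs_of_nonneg hy hg hbound
  · rw [uIcc_of_ge hy] at hg hbound
    have hmem {t : ℝ} (ht : t ∈ Icc 0 (-y)) : -t ∈ Icc y 0 :=
      ⟨by linarith [ht.2], by linarith [ht.1]⟩
    have hreflect := abs_sub_le_of_abs_deriv_le_mul_abs_of_nonneg (g := fun t => g (-t))
      (g' := fun t => -g' (-t)) (neg_nonneg.2 hy)
      (fun t ht => ((hg _ (hmem ht)).comp t (hasDerivAt_neg t)).congr_deriv (by ring))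
      (fun t ht => by simpa using hbound _ (hmem ht))
    simpa using hreflect

lemma HasDerivAt.re_comp_add_mul_I {h : ℂ → ℂ} {h' : ℂ} {x t : ℝ}
    (hd : HasDerivAt h h' (x + t * I)) :
    HasDerivAt (fun s : ℝ => (h (x + s * I)).re) (h' * I).re t := by
  have hline : HasDerivAt (fun w : ℂ => x + w * I) I t := by
    simpa using ((hasDerivAt_id (t : ℂ)).mul_const I).const_add (x : ℂ)
  exact (hd.comp (t : ℂ) hline).real_of_complex

lemma re_one_div_mul_I (c : ℂ) : (1 / c * I).re = c.im / normSq c := by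
  simp [div_eq_mul_inv]

lemma im_add_mul_I_sq_add_sq (x t a : ℝ) : ((x + t * I) ^ 2 + (a : ℂ) ^ 2).im = 2 * x * t := by
  simp [sq]; ring

lemma normSq_add_mul_I_sq_add_sq (x t a : ℝ) :
    normSq ((x + t * I) ^ 2 + (a : ℂ) ^ 2) = (x ^ 2 - t ^ 2 + a ^ 2) ^ 2 + (2 * x * t) ^ 2 := by
  simp [normSq_apply, sq]; ring

lemma sq_div_two_le_normSq_add_mul_I_sq_add_sq {x t a : ℝ} (ht : 4 * t ^ 2 ≤ x ^ 2 + a ^ 2) :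
    (x ^ 2 + a ^ 2) ^ 2 / 2 ≤ normSq ((x + t * I) ^ 2 + (a : ℂ) ^ 2) := by
  rw [normSq_add_mul_I_sq_add_sq]
  nlinarith [sq_nonneg (x * t), sq_nonneg t]

lemma abs_re_one_div_sq_add_sq_mul_I_le {x t a : ℝ} (hs : 0 < x ^ 2 + a ^ 2)
    (ht : 4 * t ^ 2 ≤ x ^ 2 + a ^ 2) :
    |(1 / ((x + t * I) ^ 2 + (a : ℂ) ^ 2) * I).re| ≤ 4 * |x| / (x ^ 2 + a ^ 2) ^ 2 * |t| := by
  have hN := sq_div_two_le_normSq_add_mul_I_sq_add_sq ht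
  have hNpos : 0 < normSq ((x + t * I) ^ 2 + (a : ℂ) ^ 2) := by nlinarith
  rw [re_one_div_mul_I, im_add_mul_I_sq_add_sq, abs_div, abs_of_pos hNpos, div_le_iff₀ hNpos,
    abs_mul, abs_mul, abs_two]
  calc 2 * |x| * |t| = 4 * |x| / (x ^ 2 + a ^ 2) ^ 2 * |t| * ((x ^ 2 + a ^ 2) ^ 2 / 2) := by
        field_simp; ring
    _ ≤ 4 * |x| / (x ^ 2 + a ^ 2) ^ 2 * |t| * normSq ((x + t * I) ^ 2 + (a : ℂ) ^ 2) := by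
        gcongr

lemma four_mul_sq_le_of_abs_le_rpow {s t : ℝ} (hs : 0 ≤ s) (ht : |t| ≤ s ^ (3 / 4 : ℝ) / 2) :
    4 * t ^ 2 ≤ s * √s := by
  have hpow : (s ^ (3 / 4 : ℝ)) ^ 2 = s * √s := by
    rw [← Real.rpow_natCast, ← Real.rpow_mul hs, Real.sqrt_eq_rpow, ← Real.rpow_one_add' hs] <;>
      norm_num
  nlinarith [abs_nonneg t, sq_abs t]

lemma add_mul_I_mem_OmegaA {a x t : ℝ} (hx : |x| ≤ 1 / 2)
    (ht : |t| ≤ (x ^ 2 + a ^ 2) ^ (3 / 4 : ℝ) / 2) : (x + t * I : ℂ) ∈ OmegaA a :=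
  ⟨by simpa using hx, by simpa using ht⟩

theorem stmt_8_general (a : ℝ) (ha : 0 < a) (ha2 : a < 1 / 2) (h : ℂ → ℂ)
    (hderiv : ∀ z ∈ OmegaA a, HasDerivAt h (1 / (z ^ 2 + (a : ℂ) ^ 2)) z)
    (x y : ℝ) (hx : |x| ≤ 1 / 2) (hy : |y| ≤ (x ^ 2 + a ^ 2) ^ ((3 : ℝ) / 4) / 2) :
    |(h ((x : ℂ) + y * Complex.I)).re - (h (x : ℂ)).re|
        ≤ |x| / (2 * Real.sqrt (x ^ 2 + a ^ 2)) ∧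
      |x| / (2 * Real.sqrt (x ^ 2 + a ^ 2)) < 1 := by
  set s := x ^ 2 + a ^ 2
  have hs : 0 < s := by positivity
  have hs1 : s ≤ 1 := by nlinarith [sq_abs x, abs_nonneg x]
  have hsqrt : 0 < √s := Real.sqrt_pos.2 hs
  have hheight : ∀ t ∈ uIcc 0 y, |t| ≤ s ^ (3 / 4 : ℝ) / 2 := fun t ht =>
    (show |t| ≤ |y| by simpa using abs_sub_left_of_mem_uIcc ht).trans hy
  have hsq : ∀ t ∈ uIcc 0 y, 4 * t ^ 2 ≤ s * √s := fun t ht =>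
    four_mul_sq_le_of_abs_le_rpow hs.le (hheight t ht)
  have hdiff := abs_sub_le_of_abs_deriv_le_mul_abs (g := fun t => (h (x + t * I)).re)
    (fun t ht => (hderiv _ (add_mul_I_mem_OmegaA hx (hheight t ht))).re_comp_add_mul_I)
    (fun t ht => abs_re_one_div_sq_add_sq_mul_I_le hs
      ((hsq t ht).trans (mul_le_of_le_one_right hs.le (Real.sqrt_le_one.2 hs1))))
  refine ⟨?_, ?_⟩
  · calc |(h (x + y * I)).re - (h x).re| ≤ 4 * |x| / s ^ 2 * y ^ 2 / 2 := by simpa using hdiff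
      _ ≤ 4 * |x| / s ^ 2 * (s * √s / 4) / 2 := by
        gcongr; linarith [hsq y right_mem_uIcc]
      _ = |x| / (2 * √s) := by
        field_simp; rw [Real.sq_sqrt hs.le]
  · have hxs : |x| ≤ √s := Real.abs_le_sqrt (by simp [s]; positivity)
    rw [div_lt_one (by positivity)]
    linarith

/-- With `u_a = Re h_a` (where `h_a` is the holomorphic antiderivative of
`1/(z²+a²)` on `Ω_a`, real on the real axis) and `y_{x,a} = (x²+a²)^{3/4}/2`, for all
`|y| ≤ y_{x,a}` one has `|u_a(x,y) − u_a(x,0)| ≤ |x|/(2(x²+a²)^{1/2}) < 1`. -/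
theorem stmt_8 (a : ℝ) (ha : 0 < a) (ha2 : a < 1 / 2) (h : ℂ → ℂ)
    (hderiv : ∀ z ∈ OmegaA a, HasDerivAt h (1 / (z ^ 2 + (a : ℂ) ^ 2)) z)
    (hreal : ∀ x : ℝ, (x : ℂ) ∈ OmegaA a → (h x).im = 0)
    (x y : ℝ) (hx : |x| ≤ 1 / 2) (hy : |y| ≤ (x ^ 2 + a ^ 2) ^ ((3 : ℝ) / 4) / 2) :
    |(h ((x : ℂ) + y * Complex.I)).re - (h (x : ℂ)).re|
        ≤ |x| / (2 * Real.sqrt (x ^ 2 + a ^ 2)) ∧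
      |x| / (2 * Real.sqrt (x ^ 2 + a ^ 2)) < 1 :=
  stmt_8_general a ha ha2 h hderiv x y hx hy
end

section
/- Let v_a(x,y) = Im((1/a)·arctan((x+iy)/a)) and y_{x,a} = (x²+a²)^{3/4}/2. Then for y_{x,a}/2 ≤ |y| ≤ y_{x,a}, |v_a(x, y)| ≥ 3/(32(x² + a²)^{1/4}). -/
/-!
Along the vertical line through `x`, the function `t ↦ Im h(x + it)` vanishes at `t = 0` and has
derivative `Re (1 / ((x + it)² + a²))`, which is at least `3 / (8(x² + a²))` as long as
`4t² ≤ x² + a²`; on `Ω_a` this holds because `x² + a² ≤ 1`. Hence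
`|Im h(x + iy)| ≥ 3|y| / (8(x² + a²))`, and `|y| ≥ (x² + a²)^{3/4} / 4` gives the bound.
-/

open Complex

theorem mul_abs_le_abs_of_le_hasDerivAt {F F' : ℝ → ℝ} {c r y : ℝ} (hF0 : F 0 = 0)
    (hF : ∀ t, |t| ≤ r → HasDerivAt F (F' t) t) (hc : ∀ t, |t| ≤ r → c ≤ F' t)
    (hy : |y| ≤ r) : c * |y| ≤ |F y| := by
  have hmem : ∀ t ∈ Set.Icc (-r) r, |t| ≤ r := fun t ht => abs_le.2 ht
  have hG : ∀ t ∈ Set.Icc (-r) r, HasDerivAt (fun t => F t - c * t) (F' t - c) t := fun t ht => by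
    have := (hF t (hmem t ht)).sub ((hasDerivAt_id' t).const_mul c)
    rwa [mul_one] at this
  have hmono : MonotoneOn (fun t => F t - c * t) (Set.Icc (-r) r) :=
    monotoneOn_of_hasDerivWithinAt_nonneg (convex_Icc _ _)
      (fun t ht => (hG t ht).continuousAt.continuousWithinAt)
      (fun t ht => (hG t (interior_subset ht)).hasDerivWithinAt)
      (fun t ht => sub_nonneg.2 (hc t (hmem t (interior_subset ht))))
  have h0 : (0 : ℝ) ∈ Set.Icc (-r) r := abs_le.1 (abs_zero.trans_le ((abs_nonneg y).trans hy))
  rcases le_or_gt 0 y with hy0 | hy0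
  · have := hmono h0 (abs_le.1 hy) hy0
    simp only [hF0, mul_zero, sub_zero, sub_nonneg] at this
    rw [abs_of_nonneg hy0]
    exact this.trans (le_abs_self _)
  · have := hmono (abs_le.1 hy) h0 hy0.le
    simp only [hF0, mul_zero, sub_zero, sub_nonpos] at this
    rw [abs_of_neg hy0]
    linarith [neg_le_abs (F y)]

theorem three_div_eight_le_re_one_div_sq_add_sq (x t a : ℝ) (hs : 0 < x ^ 2 + a ^ 2)
    (ht : 4 * t ^ 2 ≤ x ^ 2 + a ^ 2) :
    3 / (8 * (x ^ 2 + a ^ 2)) ≤ (1 / ((x + t * I) ^ 2 + (a : ℂ) ^ 2)).re := by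
  have hre : ((x + t * I) ^ 2 + (a : ℂ) ^ 2).re = x ^ 2 + a ^ 2 - t ^ 2 := by
    simp [sq]; ring
  have him : ((x + t * I) ^ 2 + (a : ℂ) ^ 2).im = 2 * x * t := by
    simp [sq]; ring
  rw [one_div, inv_re, normSq_apply, hre, him,
    div_le_div_iff₀ (by positivity) (by nlinarith [sq_nonneg (2 * x * t)])]
  nlinarith [sq_nonneg t, sq_nonneg a, mul_nonneg (sq_nonneg t) hs.le, mul_nonneg (sq_nonneg t) (sq_nonneg t),
    mul_le_mul_of_nonneg_left ht (sq_nonneg t), mul_nonneg (sq_nonneg t) (sq_nonneg a)]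

theorem HasDerivAt.im_comp_add_mul_I {h : ℂ → ℂ} {h' z : ℂ} {t : ℝ}
    (hh : HasDerivAt h h' (z + t * I)) :
    HasDerivAt (fun s : ℝ => (h (z + s * I)).im) h'.re t := by
  have hline : HasDerivAt (fun s : ℝ => z + s * I) I t := by
    simpa using ((hasDerivAt_id t).ofReal_comp.mul_const I).const_add z
  simpa [Function.comp_def] using imCLM.hasFDerivAt.comp_hasDerivAt t (hh.scomp t hline)

theorem rpow_three_div_four_sq_le {s : ℝ} (hs0 : 0 ≤ s) (hs1 : s ≤ 1) :
    (s ^ ((3 : ℝ) / 4)) ^ 2 ≤ s := by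
  rw [← Real.rpow_natCast, ← Real.rpow_mul hs0]
  exact (Real.rpow_le_rpow_of_exponent_ge' hs0 hs1 zero_le_one (by norm_num)).trans_eq (Real.rpow_one s)

theorem div_mul_rpow_three_div_four {s : ℝ} (hs : 0 < s) :
    3 / (8 * s) * (s ^ ((3 : ℝ) / 4) / 4) = 3 / (32 * s ^ ((1 : ℝ) / 4)) := by
  have hsplit : s ^ ((1 : ℝ) / 4) * s ^ ((3 : ℝ) / 4) = s := by
    rw [← Real.rpow_add hs]; norm_num
  have : 0 < s ^ ((1 : ℝ) / 4) := by positivity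
  rw [div_mul_div_comm, div_eq_div_iff (by positivity) (by positivity)]
  linear_combination 96 * hsplit

/-- With `v_a = Im h_a` and `y_{x,a} = (x²+a²)^{3/4}/2`, for
`y_{x,a}/2 ≤ |y| ≤ y_{x,a}` one has `|v_a(x,y)| ≥ 3/(32(x²+a²)^{1/4})`. -/
theorem stmt_9 (a : ℝ) (ha : 0 < a) (ha2 : a < 1 / 2) (h : ℂ → ℂ)
    (hderiv : ∀ z ∈ OmegaA a, HasDerivAt h (1 / (z ^ 2 + (a : ℂ) ^ 2)) z)
    (hreal : ∀ x : ℝ, (x : ℂ) ∈ OmegaA a → (h x).im = 0)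
    (x y : ℝ) (hx : |x| ≤ 1 / 2)
    (hy1 : (x ^ 2 + a ^ 2) ^ ((3 : ℝ) / 4) / 4 ≤ |y|)
    (hy2 : |y| ≤ (x ^ 2 + a ^ 2) ^ ((3 : ℝ) / 4) / 2) :
    3 / (32 * (x ^ 2 + a ^ 2) ^ ((1 : ℝ) / 4))
      ≤ |(h ((x : ℂ) + y * Complex.I)).im| := by
  set s := x ^ 2 + a ^ 2
  have hs : 0 < s := by positivity
  have hs1 : s ≤ 1 := by nlinarith [sq_abs x, abs_nonneg x]
  have hmem : ∀ t : ℝ, |t| ≤ |y| → (x + t * I : ℂ) ∈ OmegaA a := fun t ht =>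
    ⟨by simpa using hx, by simpa using ht.trans hy2⟩
  have hsq : ∀ t : ℝ, |t| ≤ |y| → 4 * t ^ 2 ≤ s := fun t ht => by
    nlinarith [sq_abs t, abs_nonneg t, ht.trans hy2, rpow_three_div_four_sq_le hs.le hs1]
  have hF0 : (h (x + (0 : ℝ) * I)).im = 0 := by
    simpa using hreal x (by simpa using hmem 0 (abs_zero.trans_le (abs_nonneg y)))
  calc 3 / (32 * s ^ ((1 : ℝ) / 4)) = 3 / (8 * s) * (s ^ ((3 : ℝ) / 4) / 4) :=
        (div_mul_rpow_three_div_four hs).symm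
    _ ≤ 3 / (8 * s) * |y| := by gcongr
    _ ≤ |(h (x + y * I)).im| :=
        mul_abs_le_abs_of_le_hasDerivAt hF0
          (fun t ht => (hderiv _ (hmem t ht)).im_comp_add_mul_I)
          (fun t ht => three_div_eight_le_re_one_div_sq_add_sq x t a hs (hsq t ht)) le_rfl
end

section
/- With γ as above and additionally |v(y)| ≥ c for b/2 ≤ |y| ≤ b, one has ⟨γ(b) − γ(0), γ'(0)⟩ > (b/4)·e^{c}/2, i.e., the endpoint of the curve is at distance at least (b/8)e^{c} from γ(0). -/
/-- With `γ` as in Statement 12 and additionally `|v(y)| ≥ c` for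
`b/2 ≤ |y| ≤ b`, the endpoint satisfies `⟨γ(b) − γ(0), γ'(0)⟩ > (b/4)·e^c/2`, i.e., the
endpoint of the curve is at distance at least `(b/8)e^c` from `γ(0)` in the direction
`γ'(0) = (cosh v(0) sin u(0), −cosh v(0) cos u(0))`. -/
theorem stmt_13 (b c : ℝ) (hb : 0 < b) (u v : ℝ → ℝ)
    (hu : ContinuousOn u (Set.Icc (-b) b)) (hv : ContinuousOn v (Set.Icc (-b) b))
    (hv0 : v 0 = 0) (hu1 : ∀ y ∈ Set.Icc (-b) b, |u y - u 0| < 1)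
    (hvc : ∀ y ∈ Set.Icc (-b) b, b / 2 ≤ |y| → c ≤ |v y|)
    (γ0 : ℝ × ℝ) (γ : ℝ → ℝ × ℝ)
    (hγ : ∀ y, γ y = (γ0.1 + ∫ t in (0 : ℝ)..y, Real.cosh (v t) * Real.sin (u t),
                      γ0.2 + ∫ t in (0 : ℝ)..y, -(Real.cosh (v t) * Real.cos (u t)))) :
    ((γ b).1 - (γ 0).1) * (Real.cosh (v 0) * Real.sin (u 0)) +
        ((γ b).2 - (γ 0).2) * (-(Real.cosh (v 0) * Real.cos (u 0)))
      > (b / 4) * Real.exp c / 2 := by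
  -- the integrand after taking inner product with γ'(0)
  set g : ℝ → ℝ := fun t => Real.cosh (v t) * Real.cos (u t - u 0) with hg
  have hsub : Set.Icc (0 : ℝ) b ⊆ Set.Icc (-b) b :=
    Set.Icc_subset_Icc (by linarith) le_rfl
  have hgc : ContinuousOn g (Set.Icc (0 : ℝ) b) := by
    apply ContinuousOn.mul
    · exact Real.continuous_cosh.comp_continuousOn (hv.mono hsub)
    · exact Real.continuous_cos.comp_continuousOn
        (((hu.mono hsub).sub continuousOn_const))
  have hInt : ∀ x y : ℝ, x ∈ Set.Icc (0:ℝ) b → y ∈ Set.Icc (0:ℝ) b →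
      IntervalIntegrable g MeasureTheory.volume x y := by
    intro x y hx hy
    exact (hgc.mono (Set.uIcc_subset_Icc hx hy)).intervalIntegrable
  have hb2 : (0:ℝ) ∈ Set.Icc (0:ℝ) b := ⟨le_rfl, hb.le⟩
  have hb3 : b/2 ∈ Set.Icc (0:ℝ) b := ⟨by linarith, by linarith⟩
  have hb4 : b ∈ Set.Icc (0:ℝ) b := ⟨hb.le, le_rfl⟩
  -- the LHS equals ∫ g on [0,b]
  have hsc : ContinuousOn (fun t => Real.cosh (v t) * Real.sin (u t)) (Set.Icc (0:ℝ) b) :=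
    (Real.continuous_cosh.comp_continuousOn (hv.mono hsub)).mul
      (Real.continuous_sin.comp_continuousOn (hu.mono hsub))
  have hcc : ContinuousOn (fun t => -(Real.cosh (v t) * Real.cos (u t))) (Set.Icc (0:ℝ) b) :=
    ((Real.continuous_cosh.comp_continuousOn (hv.mono hsub)).mul
      (Real.continuous_cos.comp_continuousOn (hu.mono hsub))).neg
  have hIcc0b : Set.uIcc (0:ℝ) b = Set.Icc (0:ℝ) b := Set.uIcc_of_le hb.le
  have hIs : IntervalIntegrable (fun t => Real.cosh (v t) * Real.sin (u t))
      MeasureTheory.volume 0 b := (hsc.mono hIcc0b.subset).intervalIntegrable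
  have hIc : IntervalIntegrable (fun t => -(Real.cosh (v t) * Real.cos (u t)))
      MeasureTheory.volume 0 b := (hcc.mono hIcc0b.subset).intervalIntegrable
  have hLHS : ((γ b).1 - (γ 0).1) * (Real.cosh (v 0) * Real.sin (u 0)) +
        ((γ b).2 - (γ 0).2) * (-(Real.cosh (v 0) * Real.cos (u 0)))
      = ∫ t in (0:ℝ)..b, g t := by
    rw [hγ b, hγ 0]
    simp only [intervalIntegral.integral_same, add_zero, add_sub_cancel_left, hv0,
      Real.cosh_zero, one_mul]
    rw [← intervalIntegral.integral_mul_const, ← intervalIntegral.integral_mul_const,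
      ← intervalIntegral.integral_add (hIs.mul_const _) (hIc.mul_const _)]
    apply intervalIntegral.integral_congr
    intro t _
    simp only [hg, Real.cos_sub]
    ring
  rw [hLHS]
  -- pointwise lower bound on cos factor
  have hcosb : ∀ t ∈ Set.Icc (0:ℝ) b, (1:ℝ)/2 ≤ Real.cos (u t - u 0) := by
    intro t ht
    have h1 : |u t - u 0| < 1 := hu1 t (hsub ht)
    have h2 : (u t - u 0)^2 < 1 := by
      have := abs_nonneg (u t - u 0)
      nlinarith [sq_abs (u t - u 0)]
    nlinarith [Real.one_sub_sq_div_two_le_cos (x := u t - u 0)]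
  -- split the integral
  rw [← intervalIntegral.integral_add_adjacent_intervals
      (hInt 0 (b/2) hb2 hb3) (hInt (b/2) b hb3 hb4)]
  have hA : b/4 ≤ ∫ t in (0:ℝ)..(b/2), g t := by
    have : ∫ t in (0:ℝ)..(b/2), (1:ℝ)/2 ≤ ∫ t in (0:ℝ)..(b/2), g t := by
      apply intervalIntegral.integral_mono_on (by linarith)
        intervalIntegrable_const (hInt 0 (b/2) hb2 hb3)
      intro t ht
      have ht' : t ∈ Set.Icc (0:ℝ) b := ⟨ht.1, by linarith [ht.2]⟩
      have h1 := Real.one_le_cosh (v t)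
      have h2 := hcosb t ht'
      simp only [hg]
      nlinarith
    rw [intervalIntegral.integral_const, smul_eq_mul] at this
    linarith
  have hB : (b/2) * (Real.exp c / 4) ≤ ∫ t in (b/2:ℝ)..b, g t := by
    have : ∫ t in (b/2:ℝ)..b, (Real.exp c / 4) ≤ ∫ t in (b/2:ℝ)..b, g t := by
      apply intervalIntegral.integral_mono_on (by linarith)
        intervalIntegrable_const (hInt (b/2) b hb3 hb4)
      intro t ht
      have ht' : t ∈ Set.Icc (0:ℝ) b := ⟨by linarith [ht.1], ht.2⟩
      have habs : b/2 ≤ |t| := le_trans ht.1 (le_abs_self t)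
      have hvt : c ≤ |v t| := hvc t (hsub ht') habs
      have hch : Real.exp c / 2 ≤ Real.cosh (v t) := by
        rw [Real.cosh_eq]
        have he : Real.exp c ≤ Real.exp |v t| := Real.exp_le_exp.2 hvt
        rcases abs_cases (v t) with ⟨h, _⟩ | ⟨h, _⟩
        · have := Real.exp_pos (-(v t)); rw [h] at he; linarith
        · have := Real.exp_pos (v t); rw [h] at he; linarith
      have h2 := hcosb t ht'
      have h3 : (0:ℝ) < Real.exp c / 2 := by positivity
      simp only [hg]
      nlinarith
    rw [intervalIntegral.integral_const, smul_eq_mul] at this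
    linarith
  have hec : 0 < Real.exp c := Real.exp_pos c
  nlinarith
end

section
/- The Gauss curvature of the minimal surface given by Weierstrass data g = e^{ih_a}, φ = dz satisfies K_a(z) = −|z² + a²|^{−2}/cosh⁴(v_a(z)), where v_a = Im h_a. In particular |K_a|(0) = a^{−4}, which tends to ∞ as a → 0. -/
/-!
With `g = e^{i h}` one has `|g| = e^{-v}` for `v = Im h` and `|g'| = |h'| |g|`, so the
curvature factor `4 |g'| |g| / (1 + |g|²)²` equals `|h'| · 4 e^{-2v} / (1 + e^{-2v})² =
|h'| / cosh² v`, because `2 e^{-v} cosh v = 1 + e^{-2v}`. At `z = 0`, where `v = 0` and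
`h' = a^{-2}`, this gives `a^{-4}`.
-/

open Complex Filter Topology

/-- Evaluated pointwise: `g'` is the value of `∂_z g` and `φ` that of the coefficient of `dz`. -/
noncomputable def weierstrassGaussCurvature (g g' φ : ℂ) : ℝ :=
  -(4 * ‖g'‖ * ‖g‖ / (‖φ‖ * (1 + ‖g‖ ^ 2) ^ 2)) ^ 2

lemma Complex.norm_exp_I_mul (w : ℂ) : ‖exp (I * w)‖ = Real.exp (-w.im) := by
  simp [norm_exp]

lemma Real.two_mul_exp_neg_mul_cosh (v : ℝ) :
    2 * Real.exp (-v) * Real.cosh v = 1 + Real.exp (-v) ^ 2 := by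
  have h : Real.exp (-v) * Real.exp v = 1 := by
    rw [← Real.exp_add, neg_add_cancel, Real.exp_zero]
  rw [Real.cosh_eq]
  linear_combination h

lemma weierstrassGaussCurvature_exp_I_mul (w d φ : ℂ) :
    weierstrassGaussCurvature (exp (I * w)) (exp (I * w) * (I * d)) φ
      = -(‖d‖ / (‖φ‖ * Real.cosh w.im ^ 2)) ^ 2 := by
  simp only [weierstrassGaussCurvature, norm_mul, norm_I, one_mul, norm_exp_I_mul,
    ← Real.two_mul_exp_neg_mul_cosh]
  field_simp
  ring

theorem stmt_14_general (a : ℝ) (h : ℂ → ℂ)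
    (hderiv : ∀ z ∈ OmegaA a, HasDerivAt h (1 / (z ^ 2 + (a : ℂ) ^ 2)) z)
    (h0 : h 0 = 0) :
    (∀ z ∈ OmegaA a, ∀ g' : ℂ,
        HasDerivAt (fun w => Complex.exp (Complex.I * h w)) g' z →
        -(4 * ‖g'‖ * ‖Complex.exp (Complex.I * h z)‖ /
              ((1 + ‖Complex.exp (Complex.I * h z)‖ ^ 2) ^ 2)) ^ 2
          = -((‖z ^ 2 + (a : ℂ) ^ 2‖ ^ 2)⁻¹ / Real.cosh ((h z).im) ^ 4)) ∧
    (‖((0 : ℂ)) ^ 2 + (a : ℂ) ^ 2‖ ^ 2)⁻¹ / Real.cosh ((h 0).im) ^ 4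
        = (a ^ 4)⁻¹ ∧
    Filter.Tendsto (fun t : ℝ => (t ^ 4)⁻¹) (nhdsWithin 0 (Set.Ioi 0)) Filter.atTop := by
  refine ⟨fun z hz g' hg' => ?_, ?_, ?_⟩
  · obtain rfl : g' = exp (I * h z) * (I * (1 / (z ^ 2 + (a : ℂ) ^ 2))) :=
      hg'.unique ((hderiv z hz).const_mul I).cexp
    have := weierstrassGaussCurvature_exp_I_mul (h z) (1 / (z ^ 2 + (a : ℂ) ^ 2)) 1
    simp only [weierstrassGaussCurvature, norm_one, one_mul] at this
    rw [this, one_div, norm_inv, div_pow, inv_pow, ← pow_mul]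
  · simp [h0, norm_pow, ← pow_mul]
  · simpa only [Function.comp_def, inv_pow] using
      (tendsto_pow_atTop (α := ℝ) four_ne_zero).comp tendsto_inv_nhdsGT_zero

/-- The Gauss curvature `K = −(4|∂_z g||g|/(|φ|(1+|g|²)²))²` of the
Weierstrass data `g = e^{ih_a}`, `φ = dz` satisfies
`K_a(z) = −|z² + a²|^{−2}/cosh⁴(v_a(z))` where `v_a = Im h_a`; in particular
`|K_a|(0) = a^{−4}`, which tends to `∞` as `a → 0⁺`. -/
theorem stmt_14 (a : ℝ) (ha : 0 < a) (ha2 : a < 1 / 2) (h : ℂ → ℂ)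
    (hderiv : ∀ z ∈ OmegaA a, HasDerivAt h (1 / (z ^ 2 + (a : ℂ) ^ 2)) z)
    (h0 : h 0 = 0) :
    (∀ z ∈ OmegaA a, ∀ g' : ℂ,
        HasDerivAt (fun w => Complex.exp (Complex.I * h w)) g' z →
        -(4 * ‖g'‖ * ‖Complex.exp (Complex.I * h z)‖ /
              ((1 + ‖Complex.exp (Complex.I * h z)‖ ^ 2) ^ 2)) ^ 2
          = -((‖z ^ 2 + (a : ℂ) ^ 2‖ ^ 2)⁻¹ / Real.cosh ((h z).im) ^ 4)) ∧
    (‖((0 : ℂ)) ^ 2 + (a : ℂ) ^ 2‖ ^ 2)⁻¹ / Real.cosh ((h 0).im) ^ 4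
        = (a ^ 4)⁻¹ ∧
    Filter.Tendsto (fun t : ℝ => (t ^ 4)⁻¹) (nhdsWithin 0 (Set.Ioi 0)) Filter.atTop :=
  stmt_14_general a h hderiv h0
end

section
/- For the Weierstrass representation F_a with data g = e^{ih_a}, φ = dz, base point 0, one has F_a(t, 0) = (0, 0, t) for all real t with |t| ≤ 1/2; that is, the real axis of Ω_a maps to the vertical segment of the x₃-axis. -/
lemma real_mem_OmegaA (a x : ℝ) (hx : |x| ≤ 1 / 2) : (x : ℂ) ∈ OmegaA a := by
  constructor
  · simpa using hx
  · simp only [Complex.ofReal_im, abs_zero, Complex.ofReal_re]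
    positivity

lemma exp_inv_conj (c : ℂ) (hc : c.im = 0) :
    (Complex.exp (Complex.I * c))⁻¹ = (starRingEnd ℂ) (Complex.exp (Complex.I * c)) := by
  rw [← Complex.exp_neg, ← Complex.exp_conj]
  congr 1
  rw [map_mul, Complex.conj_I, Complex.conj_eq_iff_im.mpr hc]
  ring

/-- For the Weierstrass representation `F_a` with data `g = e^{ih_a}`,
`φ = dz`, base point `0` (so `F_a = (Re Φ₁, Re Φ₂, Re Φ₃)` where the `Φⱼ` are the
antiderivatives of `((g⁻¹ − g)/2, i(g⁻¹ + g)/2, 1)` vanishing at `0`), one has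
`F_a(t, 0) = (0, 0, t)` for all real `|t| ≤ 1/2`. -/
theorem stmt_17 (a : ℝ) (ha : 0 < a) (ha2 : a < 1 / 2) (h : ℂ → ℂ)
    (hderiv : ∀ z ∈ OmegaA a, HasDerivAt h (1 / (z ^ 2 + (a : ℂ) ^ 2)) z)
    (hreal : ∀ x : ℝ, (x : ℂ) ∈ OmegaA a → (h x).im = 0)
    (h0 : h 0 = 0)
    (g : ℂ → ℂ) (hg : ∀ z, g z = Complex.exp (Complex.I * h z))
    (Φ₁ Φ₂ Φ₃ : ℂ → ℂ)
    (hΦ₁ : ∀ z ∈ OmegaA a, HasDerivAt Φ₁ (((g z)⁻¹ - g z) / 2) z)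
    (hΦ₂ : ∀ z ∈ OmegaA a, HasDerivAt Φ₂ (Complex.I * ((g z)⁻¹ + g z) / 2) z)
    (hΦ₃ : ∀ z ∈ OmegaA a, HasDerivAt Φ₃ 1 z)
    (hb1 : Φ₁ 0 = 0) (hb2 : Φ₂ 0 = 0) (hb3 : Φ₃ 0 = 0)
    (t : ℝ) (ht : |t| ≤ 1 / 2) :
    ((Φ₁ (t : ℂ)).re, (Φ₂ (t : ℂ)).re, (Φ₃ (t : ℂ)).re) = ((0 : ℝ), (0 : ℝ), t) := by
  set s : Set ℝ := Set.Icc (-(1/2)) (1/2) with hs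
  have hconv : Convex ℝ s := convex_Icc _ _
  have hmem : ∀ x ∈ s, (x : ℂ) ∈ OmegaA a := fun x hx =>
    real_mem_OmegaA a x (abs_le.mpr ⟨by simpa using hx.1, hx.2⟩)
  have hts : t ∈ s := ⟨by simpa using neg_le_of_abs_le ht, le_of_abs_le ht⟩
  have h0s : (0 : ℝ) ∈ s := ⟨by norm_num, by norm_num⟩
  -- key: real parts of the derivatives of Φ₁, Φ₂ vanish on real points
  have hkey : ∀ x ∈ s, (((g x)⁻¹ - g x) / 2).re = 0 ∧
      (Complex.I * ((g x)⁻¹ + g x) / 2).re = 0 := by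
    intro x hx
    have him := hreal x (hmem x hx)
    have hconj : (g (x : ℂ))⁻¹ = (starRingEnd ℂ) (g (x : ℂ)) := by
      rw [hg]; exact exp_inv_conj _ him
    constructor
    · rw [hconj]
      simp [Complex.div_re, Complex.sub_re, Complex.conj_re]
    · rw [hconj]
      simp [Complex.div_re, Complex.mul_re, Complex.add_im, Complex.conj_im]
  -- Φ₁ : Re Φ₁ is constant on s
  have key1 : ∀ (Φ : ℂ → ℂ) (d : ℂ → ℂ), (∀ z ∈ OmegaA a, HasDerivAt Φ (d z) z) →
      (∀ x ∈ s, (d x).re = 0) → (Φ t).re = (Φ 0).re := by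
    intro Φ d hd hdre
    have hder : ∀ x ∈ s, HasDerivWithinAt (fun x : ℝ => (Φ x).re) ((d x).re) s x := by
      intro x hx
      exact ((hd x (hmem x hx)).real_of_complex).hasDerivWithinAt
    have := hconv.norm_image_sub_le_of_norm_hasDerivWithin_le (C := 0) hder
      (fun x hx => by rw [hdre x hx]; simp) h0s hts
    have : ‖(Φ (t : ℂ)).re - (Φ ((0 : ℝ) : ℂ)).re‖ ≤ 0 := by simpa using this
    have := le_antisymm this (norm_nonneg _)
    have h' := norm_eq_zero.mp this
    rw [show ((0:ℝ):ℂ) = 0 from Complex.ofReal_zero] at h'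
    linarith
  have e1 : (Φ₁ (t : ℂ)).re = 0 := by
    have := key1 Φ₁ (fun z => ((g z)⁻¹ - g z) / 2) hΦ₁ (fun x hx => (hkey x hx).1)
    simpa [hb1] using this
  have e2 : (Φ₂ (t : ℂ)).re = 0 := by
    have := key1 Φ₂ (fun z => Complex.I * ((g z)⁻¹ + g z) / 2) hΦ₂ (fun x hx => (hkey x hx).2)
    simpa [hb2] using this
  have e3 : (Φ₃ (t : ℂ)).re = t := by
    have hder : ∀ x ∈ s, HasDerivWithinAt (fun x : ℝ => (Φ₃ x).re - x) ((1 : ℂ).re - 1) s x := by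
      intro x hx
      exact (((hΦ₃ x (hmem x hx)).real_of_complex).sub (hasDerivAt_id x)).hasDerivWithinAt
    have hle := hconv.norm_image_sub_le_of_norm_hasDerivWithin_le (C := 0) hder
      (fun x hx => by simp) h0s hts
    have h00 : (Φ₃ ((0 : ℝ) : ℂ)).re = 0 := by
      simpa using congrArg Complex.re hb3
    rw [h00] at hle
    have : ‖(Φ₃ (t : ℂ)).re - t - (0 - 0)‖ ≤ 0 := by simpa using hle
    have := le_antisymm this (norm_nonneg _)
    have := norm_eq_zero.mp this
    linarith [this]
  simp [e1, e2, e3]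
end
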